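/- arXiv:2111.10244 — 3 statements merged into one kernel-verified Lean document; each statement's English description precedes it below -/
import Mathlib

section
/- If an N-partite pure state |ψ⟩ can be converted to |φ⟩ by LOSR only when there exists a state |ζ⟩ with, for every bipartition β, the sorted squared Schmidt vector of ψ equal to the sorted tensor product of those of φ and ζ, then for θ ≠ φ in (0, π/4] the generalized GHZ states |GHZ_N^θ⟩ = cos θ |0…0⟩ + sin θ |1…1⟩ and |GHZ_N^φ⟩ are not LOSR-convertible to one another in either direction. -/
/-!
If the criterion holds for `θ → φ`, the nonzero entries of `(cos² φ, sin² φ) ⊗ ζ` are the two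
numbers `cos² θ, sin² θ`. Since both factors `cos² φ, sin² φ` are nonzero, each nonzero entry of
`ζ` contributes two entries, so `ζ` has a single nonzero entry, which must be `1`; hence
`{cos² φ, sin² φ} = {cos² θ, sin² θ}`. On `(0, π/4]` the cosine dominates the sine, so this
forces `cos² φ = cos² θ`, and `cos²` is injective on `[0, π/2]`.
-/

open Real

/-- The multiset of entries of the tensor product of the squared-Schmidt vector
`(cos² φ, sin² φ)` with an auxiliary vector `ζ`. -/
noncomputable def schmidtTensor (φ : ℝ) {n : ℕ} (ζ : Fin n → ℝ) : Multiset ℝ :=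
  (Finset.univ.val.map fun i => cos φ ^ 2 * ζ i) +
  (Finset.univ.val.map fun i => sin φ ^ 2 * ζ i)

open Finset Set

theorem Multiset.filter_ne_zero_map_const_mul {ι M₀ : Type*} [MulZeroClass M₀]
    [NoZeroDivisors M₀] [DecidableEq M₀] {a : M₀} (ha : a ≠ 0) (s : Multiset ι) (f : ι → M₀) :
    (s.map (a * f ·)).filter (· ≠ 0) = (s.filter (f · ≠ 0)).map (a * f ·) := by
  rw [Multiset.filter_map]
  exact congrArg _ (Multiset.filter_congr fun i _ => by simp [ha])

theorem pair_eq_of_filter_ne_zero_tensor_eq_pair {ι R : Type*} [Fintype ι]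
    [NonAssocSemiring R] [NoZeroDivisors R] [DecidableEq R] {a b x y : R} (ha : a ≠ 0)
    (hb : b ≠ 0) {ζ : ι → R} (hζ : ∑ i, ζ i = 1)
    (h : (univ.val.map (a * ζ ·) + univ.val.map (b * ζ ·)).filter (· ≠ 0) = {x, y}) :
    ({a, b} : Multiset R) = {x, y} := by
  rw [Multiset.filter_add, Multiset.filter_ne_zero_map_const_mul ha,
    Multiset.filter_ne_zero_map_const_mul hb, ← filter_val] at h
  obtain ⟨i, hi⟩ : ∃ i, univ.filter (ζ · ≠ 0) = {i} := by
    rw [← card_eq_one]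
    simpa [← two_mul, card_def] using congrArg Multiset.card h
  have hζi : ζ i = 1 := by rw [← hζ, ← sum_filter_ne_zero, hi, sum_singleton]
  simpa [hi, hζi, Multiset.singleton_add] using h

theorem Real.sin_sq_le_cos_sq {x : ℝ} (hx : |x| ≤ π / 4) : sin x ^ 2 ≤ cos x ^ 2 := by
  obtain ⟨hl, hu⟩ := abs_le.mp hx
  have : 0 ≤ cos (2 * x) := cos_nonneg_of_neg_pi_div_two_le_of_le (by linarith) (by linarith)
  linarith [cos_two_mul' x]

theorem Real.cos_sq_le_of_mem_pair {x y : ℝ} (hy : |y| ≤ π / 4)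
    (h : cos x ^ 2 ∈ ({cos y ^ 2, sin y ^ 2} : Multiset ℝ)) : cos x ^ 2 ≤ cos y ^ 2 := by
  rcases Multiset.mem_cons.mp h with h | h
  · exact h.le
  · exact (Multiset.mem_singleton.mp h).trans_le (sin_sq_le_cos_sq hy)

theorem Real.injOn_cos_sq : InjOn (cos · ^ 2) (Icc 0 (π / 2)) := by
  intro x hx y hy h
  have hIcc : Icc 0 (π / 2) ⊆ Icc 0 π := Icc_subset_Icc_right (by linarith [pi_pos])
  have hcos {z : ℝ} (hz : z ∈ Icc 0 (π / 2)) : 0 ≤ cos z :=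
    cos_nonneg_of_neg_pi_div_two_le_of_le (by linarith [hz.1, pi_pos]) hz.2
  exact injOn_cos (hIcc hx) (hIcc hy) ((pow_left_inj₀ (hcos hx) (hcos hy) two_ne_zero).mp h)

theorem Real.eq_of_cos_sq_sin_sq_pair_eq {x y : ℝ} (hx : x ∈ Icc 0 (π / 4))
    (hy : y ∈ Icc 0 (π / 4))
    (h : ({cos x ^ 2, sin x ^ 2} : Multiset ℝ) = {cos y ^ 2, sin y ^ 2}) : x = y := by
  have habs {z : ℝ} (hz : z ∈ Icc 0 (π / 4)) : |z| ≤ π / 4 := (abs_of_nonneg hz.1).trans_le hz.2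
  have hIcc : Icc 0 (π / 4) ⊆ Icc 0 (π / 2) := Icc_subset_Icc_right (by linarith [pi_pos])
  refine injOn_cos_sq (hIcc hx) (hIcc hy) (le_antisymm ?_ ?_)
  · exact cos_sq_le_of_mem_pair (habs hy) (h ▸ Multiset.mem_cons_self _ _)
  · exact cos_sq_le_of_mem_pair (habs hx) (h ▸ Multiset.mem_cons_self _ _)

theorem ghz_states_losr_incomparable
    (conv : ℝ → ℝ → Prop)
    -- the assumed necessary criterion for LOSR convertibility of the
    -- generalized GHZ states |GHZ_N^θ⟩ → |GHZ_N^φ⟩ (for every bipartition the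
    -- Schmidt vector is (cos²θ, sin²θ), so the criterion reduces to this):
    (hcrit : ∀ θ φ : ℝ, conv θ φ →
      ∃ (n : ℕ) (ζ : Fin n → ℝ), (∀ i, 0 ≤ ζ i) ∧ (∑ i, ζ i = 1) ∧
        Multiset.filter (· ≠ 0) (schmidtTensor φ ζ) =
          Multiset.filter (· ≠ 0) ({cos θ ^ 2, sin θ ^ 2} : Multiset ℝ))
    (θ φ : ℝ) (hθ : θ ∈ Set.Ioc 0 (π / 4)) (hφ : φ ∈ Set.Ioc 0 (π / 4))
    (hne : θ ≠ φ) :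
    ¬ conv θ φ ∧ ¬ conv φ θ := by
  have not_conv {θ φ : ℝ} (hθ : θ ∈ Ioc 0 (π / 4)) (hφ : φ ∈ Ioc 0 (π / 4)) (hne : θ ≠ φ) :
      ¬ conv θ φ := by
    intro hconv
    obtain ⟨n, ζ, -, hsum, htensor⟩ := hcrit θ φ hconv
    have hsin {z : ℝ} (hz : z ∈ Ioc 0 (π / 4)) : sin z ≠ 0 :=
      (sin_pos_of_pos_of_lt_pi hz.1 (by linarith [hz.2, pi_pos])).ne'
    have hcos {z : ℝ} (hz : z ∈ Ioc 0 (π / 4)) : cos z ≠ 0 :=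
      (cos_pos_of_mem_Ioo ⟨by linarith [hz.1, pi_pos], by linarith [hz.2, pi_pos]⟩).ne'
    rw [Multiset.filter_eq_self (s := {cos θ ^ 2, sin θ ^ 2}).mpr (by simp [hsin hθ, hcos hθ])]
      at htensor
    have hpair := pair_eq_of_filter_ne_zero_tensor_eq_pair (pow_ne_zero 2 (hcos hφ))
      (pow_ne_zero 2 (hsin hφ)) hsum htensor
    exact hne (eq_of_cos_sq_sin_sq_pair_eq (Ioc_subset_Icc_self hφ) (Ioc_subset_Icc_self hθ)
      hpair).symm
  exact ⟨not_conv hθ hφ hne, not_conv hφ hθ hne.symm⟩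
end

section
/- Applying an LOSR transformation to an LOSR-free assemblage yields an LOSR-free assemblage: if σ_{a|x} = Σ_λ p(λ) p(a|x,λ) ρ_λ is free and σ'_{a'|x'} = Σ_{μ} Σ_{a,x} p(μ) p(a',x|x',a,μ) p(a|x) E_μ(ρ_{a|x}) with each p(a',x|x',a,μ) a valid non-retrocausal comb and each E_μ a quantum channel, then σ'_{a'|x'} admits a decomposition Σ_ν q(ν) q(a'|x',ν) ω_ν with q a distribution, q(·|x',ν) conditional distributions, and ω_ν density matrices. -/
open Matrix ComplexOrder

/-- A bipartite assemblage `σ a x` is LOSR-free if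
`σ_{a|x} = Σ_λ p(λ) p(a|x,λ) ρ_λ`. -/
def IsLOSRFree {A X : Type} [Fintype A] [Fintype X] {d : ℕ}
    (σ : A → X → Matrix (Fin d) (Fin d) ℂ) : Prop :=
  ∃ (Λ : Type) (_ : Fintype Λ) (p : Λ → ℝ) (q : A → X → Λ → ℝ)
    (ρ : Λ → Matrix (Fin d) (Fin d) ℂ),
    (∀ l, 0 ≤ p l) ∧ (∑ l, p l = 1) ∧
    (∀ a x l, 0 ≤ q a x l) ∧ (∀ x l, ∑ a, q a x l = 1) ∧
    (∀ l, (ρ l).PosSemidef ∧ (ρ l).trace = 1) ∧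
    (∀ a x, σ a x = ∑ l, (p l * q a x l) • ρ l)

/-! An LOSR transformation factors into a classical wiring on Alice's side and a channel on
Bob's side for each value `m` of the shared randomness, followed by a mixture over `m`.
Each of the three operations keeps the local hidden-state form: the channel acts on the hidden
states, the wiring composes with the response functions, and a mixture enlarges the hidden
variable to the pairs `(m, λ)`. -/

theorem sum_stochastic_comp_eq_one {R A X A' : Type*} [CommSemiring R]
    [Fintype A] [Fintype X] [Fintype A'] (post : A' → A → R) (pre : X → R) (q : A → X → R)
    (hpost : ∀ a, ∑ a', post a' a = 1) (hpre : ∑ x, pre x = 1) (hq : ∀ x, ∑ a, q a x = 1) :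
    ∑ a', ∑ a, ∑ x, post a' a * pre x * q a x = 1 := by
  calc ∑ a', ∑ a, ∑ x, post a' a * pre x * q a x
      = ∑ a, (∑ a', post a' a) * ∑ x, pre x * q a x := by
        rw [Finset.sum_comm]
        simp only [mul_assoc, ← Finset.mul_sum, ← Finset.sum_mul]
    _ = ∑ x, pre x * ∑ a, q a x := by
        simp only [hpost, one_mul, Finset.mul_sum]
        exact Finset.sum_comm
    _ = 1 := by simp only [hq, mul_one, hpre]

namespace IsLOSRFree

variable {A X : Type} [Fintype A] [Fintype X] {d : ℕ}

theorem map_channel {σ : A → X → Matrix (Fin d) (Fin d) ℂ} (hσ : IsLOSRFree σ)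
    (E : Matrix (Fin d) (Fin d) ℂ →ₗ[ℂ] Matrix (Fin d) (Fin d) ℂ)
    (hEpos : ∀ ρ : Matrix (Fin d) (Fin d) ℂ, ρ.PosSemidef → (E ρ).PosSemidef)
    (hEtr : ∀ ρ : Matrix (Fin d) (Fin d) ℂ, (E ρ).trace = ρ.trace) :
    IsLOSRFree fun a x => E (σ a x) := by
  obtain ⟨Λ, _, p, q, ρ, hp, hpsum, hq, hqsum, hρ, hσ⟩ := hσ
  refine ⟨Λ, inferInstance, p, q, fun l => E (ρ l), hp, hpsum, hq, hqsum,
    fun l => ⟨hEpos _ (hρ l).1, (hEtr _).trans (hρ l).2⟩, fun a x => ?_⟩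
  simp only [hσ, map_sum, LinearMap.map_smul_of_tower]

theorem classical_processing {A' X' : Type} [Fintype A'] [Fintype X']
    {σ : A → X → Matrix (Fin d) (Fin d) ℂ} (hσ : IsLOSRFree σ)
    (pre : X → X' → ℝ) (post : A' → A → X' → ℝ)
    (hpre : ∀ x x', 0 ≤ pre x x') (hpresum : ∀ x', ∑ x, pre x x' = 1)
    (hpost : ∀ a' a x', 0 ≤ post a' a x') (hpostsum : ∀ a x', ∑ a', post a' a x' = 1) :
    IsLOSRFree fun a' x' => ∑ a, ∑ x, (post a' a x' * pre x x') • σ a x := by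
  obtain ⟨Λ, _, p, q, ρ, hp, hpsum, hq, hqsum, hρ, hσ⟩ := hσ
  refine ⟨Λ, inferInstance, p, fun a' x' l => ∑ a, ∑ x, post a' a x' * pre x x' * q a x l, ρ,
    hp, hpsum, fun a' x' l => ?_, fun x' l => ?_, hρ, fun a' x' => ?_⟩
  · exact Finset.sum_nonneg fun a _ => Finset.sum_nonneg fun x _ =>
      mul_nonneg (mul_nonneg (hpost _ _ _) (hpre _ _)) (hq _ _ _)
  · exact sum_stochastic_comp_eq_one (post · · x') (pre · x') (q · · l)
      (hpostsum · x') (hpresum x') (hqsum · l)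
  · simp only [hσ, Finset.smul_sum, Finset.mul_sum, Finset.sum_smul, smul_smul]
    refine ((Finset.sum_congr rfl fun a _ => Finset.sum_comm).trans Finset.sum_comm).trans
      (Finset.sum_congr rfl fun l _ => Finset.sum_congr rfl fun a _ =>
        Finset.sum_congr rfl fun x _ => ?_)
    congr 1; ring

theorem sum_smul {M : Type} [Fintype M] {σ : M → A → X → Matrix (Fin d) (Fin d) ℂ}
    (hσ : ∀ m, IsLOSRFree (σ m)) (w : M → ℝ) (hw : ∀ m, 0 ≤ w m) (hwsum : ∑ m, w m = 1) :
    IsLOSRFree fun a x => ∑ m, w m • σ m a x := by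
  choose Λ _ p q ρ hp hpsum hq hqsum hρ hσ using hσ
  refine ⟨Σ m, Λ m, inferInstance, fun ml => w ml.1 * p ml.1 ml.2,
    fun a x ml => q ml.1 a x ml.2, fun ml => ρ ml.1 ml.2,
    fun ml => mul_nonneg (hw _) (hp _ _), ?_, fun a x ml => hq _ _ _ _,
    fun x ml => hqsum _ _ _, fun ml => hρ _ _, fun a x => ?_⟩
  · simp only [Fintype.sum_sigma, ← Finset.mul_sum, hpsum, mul_one, hwsum]
  · simp only [hσ, Fintype.sum_sigma, Finset.smul_sum, smul_smul, mul_assoc]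

end IsLOSRFree

theorem losr_transformation_preserves_free
    {A X A' X' M : Type} [Fintype A] [Fintype X] [Fintype A'] [Fintype X'] [Fintype M]
    {d : ℕ}
    (σ : A → X → Matrix (Fin d) (Fin d) ℂ) (hσfree : IsLOSRFree σ)
    -- shared randomness
    (pM : M → ℝ) (hpM : ∀ m, 0 ≤ pM m) (hpMsum : ∑ m, pM m = 1)
    -- Alice's comb: pre-processing `pre x x' m` and post-processing `post a' a x' m`
    (pre : X → X' → M → ℝ) (post : A' → A → X' → M → ℝ)
    (hpre : ∀ x x' m, 0 ≤ pre x x' m) (hpresum : ∀ x' m, ∑ x, pre x x' m = 1)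
    (hpost : ∀ a' a x' m, 0 ≤ post a' a x' m) (hpostsum : ∀ a x' m, ∑ a', post a' a x' m = 1)
    -- the non-retrocausal comb `p(a',x|x',a,μ) = p(a'|a,x',μ) p(x|x',μ)`
    (comb : A' → X → X' → A → M → ℝ)
    (hcomb : ∀ a' x x' a m, comb a' x x' a m = post a' a x' m * pre x x' m)
    -- Bob's local channels: linear, positivity-preserving and trace-preserving
    (E : M → Matrix (Fin d) (Fin d) ℂ →ₗ[ℂ] Matrix (Fin d) (Fin d) ℂ)
    (hEpos : ∀ m (ρ : Matrix (Fin d) (Fin d) ℂ), ρ.PosSemidef → (E m ρ).PosSemidef)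
    (hEtr : ∀ m (ρ : Matrix (Fin d) (Fin d) ℂ), (E m ρ).trace = ρ.trace)
    -- the transformed assemblage
    (σ' : A' → X' → Matrix (Fin d) (Fin d) ℂ)
    (hσ' : ∀ a' x', σ' a' x' =
      ∑ m, ∑ a, ∑ x, (pM m * comb a' x x' a m) • E m (σ a x)) :
    IsLOSRFree σ' := by
  have hlocal : ∀ m, IsLOSRFree fun a' x' =>
      ∑ a, ∑ x, (post a' a x' m * pre x x' m) • E m (σ a x) := fun m =>
    (hσfree.map_channel (E m) (hEpos m) (hEtr m)).classical_processing
      (pre · · m) (post · · · m) (hpre · · m) (hpresum · m) (hpost · · · m) (hpostsum · · m)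
  have hσ'_mix : σ' = fun a' x' =>
      ∑ m, pM m • ∑ a, ∑ x, (post a' a x' m * pre x x' m) • E m (σ a x) := by
    funext a' x'
    simp only [hσ', hcomb, Finset.smul_sum, smul_smul]
  rw [hσ'_mix]
  exact IsLOSRFree.sum_smul hlocal pM hpM hpMsum
end

section
/- Every conditional probability distribution p(a', x | x', a, λ) satisfying the no-retrocausation factorization p(a',x|x',a,λ) = p(a'|a,x',λ)·p(x|x',λ) over finite sets can be written as a convex combination Σ_{λ̃} q(λ̃) D(a'|a,x',λ̃) D(x|x',λ̃) of products of deterministic conditional distributions. -/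
/-!
Draw, independently for every input, an output from the given conditional distribution. The
resulting random function is deterministic, and its law `piWeight` (a product measure on the finite
set of functions) has the given conditional distributions as its one-input marginals. Applying this
to `q`, with inputs `(a, x')`, and to `r`, with inputs `x'`, and taking the product of the two laws
decomposes `P = q * r`.
-/

open Finset

section PiWeight

variable {I V : Type*} [Fintype I]

def piWeight (p : I → V → ℝ) (f : I → V) : ℝ :=
  ∏ i, p i (f i)

lemma piWeight_nonneg {p : I → V → ℝ} (hp : ∀ i v, 0 ≤ p i v) (f : I → V) :
    0 ≤ piWeight p f :=
  prod_nonneg fun i _ => hp i (f i)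

lemma sum_piWeight [Fintype V] [DecidableEq I] {p : I → V → ℝ} (hp : ∀ i, ∑ v, p i v = 1) :
    ∑ f, piWeight p f = 1 := by
  unfold piWeight
  rw [← Fintype.prod_sum p]
  exact Fintype.prod_eq_one _ hp

lemma sum_piWeight_mul_ite [Fintype V] [DecidableEq I] [DecidableEq V] {p : I → V → ℝ}
    (hp : ∀ i, ∑ v, p i v = 1) (i : I) (v : V) :
    ∑ f, piWeight p f * (if v = f i then 1 else 0) = p i v := by
  let t : (j : I) → Finset V := Function.update (fun _ => univ) i {v}
  have hfilter : univ.filter (fun f : I → V => v = f i) = Fintype.piFinset t := by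
    ext f
    simp only [mem_filter, mem_univ, true_and, Fintype.mem_piFinset, t]
    refine ⟨fun h j => ?_, fun h => by simpa [eq_comm] using h i⟩
    rcases eq_or_ne j i with rfl | hj
    · simp [h]
    · simp [hj]
  have hrest : ∀ j : {j // j ≠ i}, ∑ u ∈ t j, p j u = 1 := fun j => by
    simp only [t, Function.update_of_ne j.2]
    exact hp j
  calc ∑ f, piWeight p f * (if v = f i then 1 else 0)
      = ∑ f ∈ Fintype.piFinset t, ∏ j, p j (f j) := by
        rw [← hfilter, sum_filter]
        simp only [piWeight, mul_ite, mul_one, mul_zero]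
    _ = ∏ j, ∑ u ∈ t j, p j u := (prod_univ_sum t _).symm
    _ = p i v := by
        rw [Fintype.prod_eq_mul_prod_subtype_ne _ i, Fintype.prod_eq_one _ hrest]
        simp [t]

end PiWeight

theorem fine_decomposition_of_comb_general
    {A A' X X' : Type} [Fintype A] [Fintype A'] [Fintype X] [Fintype X']
    [DecidableEq A'] [DecidableEq X]
    (P : A' → X → X' → A → ℝ)
    (q : A' → A → X' → ℝ) (r : X → X' → ℝ)
    (hq : ∀ a' a x', 0 ≤ q a' a x') (hqsum : ∀ a x', ∑ a', q a' a x' = 1)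
    (hr : ∀ x x', 0 ≤ r x x') (hrsum : ∀ x', ∑ x, r x x' = 1)
    (hfact : ∀ a' x x' a, P a' x x' a = q a' a x' * r x x') :
    ∃ (Λ : Type) (_ : Fintype Λ) (w : Λ → ℝ)
      (f : Λ → A → X' → A') (g : Λ → X' → X),
      (∀ l, 0 ≤ w l) ∧ (∑ l, w l = 1) ∧
      (∀ a' x x' a, P a' x x' a =
        ∑ l, w l * (if a' = f l a x' then 1 else 0) * (if x = g l x' then 1 else 0)) := by
  classical
  let qk : A × X' → A' → ℝ := fun i a' => q a' i.1 i.2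
  let rk : X' → X → ℝ := fun x' x => r x x'
  have hqk : ∀ i, ∑ a', qk i a' = 1 := fun i => hqsum i.1 i.2
  have hrk : ∀ x', ∑ x, rk x' x = 1 := hrsum
  refine ⟨(A × X' → A') × (X' → X), inferInstance, fun l => piWeight qk l.1 * piWeight rk l.2,
    fun l a x' => l.1 (a, x'), fun l => l.2, fun l => ?_, ?_, fun a' x x' a => ?_⟩
  · exact mul_nonneg (piWeight_nonneg (fun i a' => hq a' i.1 i.2) l.1)
      (piWeight_nonneg (fun x' x => hr x x') l.2)
  · rw [Fintype.sum_prod_type, ← sum_mul_sum, sum_piWeight hqk, sum_piWeight hrk, mul_one]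
  · rw [hfact, show q a' a x' * r x x' = qk (a, x') a' * rk x' x from rfl,
      ← sum_piWeight_mul_ite hqk (a, x') a', ← sum_piWeight_mul_ite hrk x' x,
      sum_mul_sum, Fintype.sum_prod_type]
    refine sum_congr rfl fun _ _ => sum_congr rfl fun _ _ => ?_
    ring

theorem fine_decomposition_of_comb
    {A A' X X' : Type} [Fintype A] [Fintype A'] [Fintype X] [Fintype X']
    [DecidableEq A] [DecidableEq A'] [DecidableEq X] [DecidableEq X']
    (P : A' → X → X' → A → ℝ)
    (q : A' → A → X' → ℝ) (r : X → X' → ℝ)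
    (hq : ∀ a' a x', 0 ≤ q a' a x') (hqsum : ∀ a x', ∑ a', q a' a x' = 1)
    (hr : ∀ x x', 0 ≤ r x x') (hrsum : ∀ x', ∑ x, r x x' = 1)
    (hfact : ∀ a' x x' a, P a' x x' a = q a' a x' * r x x') :
    ∃ (Λ : Type) (_ : Fintype Λ) (w : Λ → ℝ)
      (f : Λ → A → X' → A') (g : Λ → X' → X),
      (∀ l, 0 ≤ w l) ∧ (∑ l, w l = 1) ∧
      (∀ a' x x' a, P a' x x' a =
        ∑ l, w l * (if a' = f l a x' then 1 else 0) * (if x = g l x' then 1 else 0)) :=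
  fine_decomposition_of_comb_general P q r hq hqsum hr hrsum hfact
end
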